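/- arXiv:1102.3030 — 6 statements merged into one kernel-verified Lean document; each statement's English description precedes it below -/
import Mathlib

section
/- Let q_1,…,q_{2k} be positive integers with Σ q_i = 2Q, and define β_i = 1 for i ≤ k, β_i = 2 for i > k. Then there exists a permutation π of {1,…,2k} with Σ_i Σ_j q_{π(i)} q_{π(j)} |β_i − β_j| ≥ 2Q² if and only if there exists a subset I ⊆ {1,…,2k} with |I| = k and Σ_{i∈I} q_i = Q. -/
/-!
Let S be the first k positions, where β = 1, so that β = 2 on its complement. Only pairs with one
index on each side contribute, so the objective of π is 2AB with A = Σ_{i ∈ S} q_{π(i)} and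
B = 2Q - A. Since 2AB = 2Q² - 2(A - Q)², the bound 2Q² ≤ 2AB holds exactly when A = Q, and the
sets π(S) are precisely the k-element subsets of the indices.
-/

open Finset

theorem sum_sum_mul_mul_abs_sub_ite {ι R : Type*} [Fintype ι] [DecidableEq ι]
    [CommRing R] [LinearOrder R] [IsStrictOrderedRing R]
    (S : Finset ι) (f : ι → R) (a b : R) :
    ∑ i, ∑ j, f i * f j * |(if i ∈ S then a else b) - (if j ∈ S then a else b)| =
      2 * |a - b| * (∑ i ∈ S, f i) * ∑ i ∈ Sᶜ, f i := by
  calc _ = ∑ i ∈ S, ∑ j ∈ Sᶜ, f i * f j * |a - b| +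
        ∑ i ∈ Sᶜ, ∑ j ∈ S, f i * f j * |b - a| := by
        rw [← sum_add_sum_compl S]
        congr 1
        · refine sum_congr rfl fun i hi => ?_
          rw [← sum_add_sum_compl S, sum_eq_zero fun j hj => by simp [hi, hj], zero_add]
          exact sum_congr rfl fun j hj => by simp [hi, mem_compl.1 hj]
        · refine sum_congr rfl fun i hi => ?_
          rw [← sum_compl_add_sum S,
            sum_eq_zero fun j hj => by simp [mem_compl.1 hi, mem_compl.1 hj], zero_add]
          exact sum_congr rfl fun j hj => by simp [mem_compl.1 hi, hj]
    _ = _ := by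
      simp only [← sum_mul, ← sum_mul_sum, abs_sub_comm b a]
      ring

theorem two_mul_sq_le_two_mul_mul_iff {R : Type*} [CommRing R] [LinearOrder R]
    [IsStrictOrderedRing R] {a b c : R} (h : a + b = 2 * c) :
    2 * c ^ 2 ≤ 2 * a * b ↔ a = c := by
  obtain rfl : b = 2 * c - a := by linear_combination h
  constructor
  · intro hle
    nlinarith [sq_nonneg (a - c)]
  · rintro rfl
    nlinarith

theorem exists_perm_sum_comp_iff_exists_card_eq {ι M : Type*} [Fintype ι] [DecidableEq ι]
    [AddCommMonoid M] (S : Finset ι) (g : ι → M) (P : M → Prop) :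
    (∃ π : Equiv.Perm ι, P (∑ i ∈ S, g (π i))) ↔
      ∃ I : Finset ι, I.card = S.card ∧ P (∑ i ∈ I, g i) := by
  constructor
  · rintro ⟨π, hπ⟩
    exact ⟨S.map π.toEmbedding, card_map _, by rwa [sum_map]⟩
  · rintro ⟨I, hI, hP⟩
    obtain ⟨π, rfl⟩ := Equiv.Perm.exists_map_finset_eq S I hI.symm
    exact ⟨π, by rwa [sum_map] at hP⟩

theorem stmt2_general (k Q : ℕ) (q : Fin (2 * k) → ℕ)
    (hsum : ∑ i, q i = 2 * Q)
    (β : Fin (2 * k) → ℤ) (hβ : ∀ i, β i = if (i : ℕ) < k then 1 else 2) :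
    (∃ π : Equiv.Perm (Fin (2 * k)),
        2 * (Q : ℤ) ^ 2 ≤ ∑ i, ∑ j, (q (π i) : ℤ) * (q (π j) : ℤ) * |β i - β j|) ↔
    (∃ I : Finset (Fin (2 * k)), I.card = k ∧ ∑ i ∈ I, q i = Q) := by
  set S : Finset (Fin (2 * k)) := {i | (i : ℕ) < k}
  have hS : S.card = k := by simp [S, Fin.card_filter_val_lt]; omega
  obtain rfl : β = fun i => if i ∈ S then 1 else 2 := funext fun i => by simp [S, hβ]
  have htotal (π : Equiv.Perm (Fin (2 * k))) :
      ∑ i ∈ S, (q (π i) : ℤ) + ∑ i ∈ Sᶜ, (q (π i) : ℤ) = 2 * Q := by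
    rw [sum_add_sum_compl, Equiv.sum_comp π (fun i => (q i : ℤ))]
    exact_mod_cast hsum
  calc _ ↔ ∃ π : Equiv.Perm (Fin (2 * k)), ∑ i ∈ S, (q (π i) : ℤ) = Q := by
        refine exists_congr fun π => ?_
        rw [sum_sum_mul_mul_abs_sub_ite S (fun i => (q (π i) : ℤ)),
          ← two_mul_sq_le_two_mul_mul_iff (htotal π)]
        norm_num
    _ ↔ ∃ I : Finset (Fin (2 * k)), I.card = S.card ∧ ∑ i ∈ I, (q i : ℤ) = Q :=
        exists_perm_sum_comp_iff_exists_card_eq S (fun i => (q i : ℤ)) (· = (Q : ℤ))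
    _ ↔ _ := by simp only [hS]; norm_cast

/-- Correctness of the reduction from Partition to the Wiener Max-QAP:
with β_i = 1 for i ≤ k and β_i = 2 for i > k, there is a permutation π of {1,…,2k}
whose QAP objective is ≥ 2Q² iff there is a k-element subset I with Σ_{i∈I} q_i = Q. -/
theorem stmt2 (k Q : ℕ) (hk : 1 ≤ k) (q : Fin (2 * k) → ℕ)
    (hq : ∀ i, 0 < q i) (hsum : ∑ i, q i = 2 * Q)
    (β : Fin (2 * k) → ℤ) (hβ : ∀ i, β i = if (i : ℕ) < k then 1 else 2) :
    (∃ π : Equiv.Perm (Fin (2 * k)),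
        2 * (Q : ℤ) ^ 2 ≤ ∑ i, ∑ j, (q (π i) : ℤ) * (q (π j) : ℤ) * |β i - β j|) ↔
    (∃ I : Finset (Fin (2 * k)), I.card = k ∧ ∑ i ∈ I, q i = Q) :=
  stmt2_general k Q q hsum β hβ
end

section
/- Every instance of the Wiener Max-QAP possesses an optimal permutation that is V-shaped: there exists a permutation π maximizing Z_π(A,B) and an index ℓ with 1 ≤ ℓ ≤ n such that π(i) > π(i+1) for all i < ℓ and π(i) < π(i+1) for all i ≥ ℓ. -/
/-!
For a permutation `π` let `f p = α (π p)` be the weight at position `p`, `L t = f 0 + ⋯ + f t` and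
`T = L (n - 1)`. Each gap `β (t + 1) - β t` is crossed by every pair of positions separated by the
cut after `t`, so the objective equals `2 ∑ₜ (β (t + 1) - β t) · L t · (T - L t)`. Swapping the
weights at positions `u, u + 1` only moves `L u`, by `δ = f u - f (u + 1)`, and changes
`L u (T - L u)` by `δ (2 L u - δ - T)`. If `f` rises at `a` and later falls at `b`, one of the two
swaps changes every term by a nonnegative amount and strictly improves a tie-breaker. Hence a
lexicographic maximiser of `(objective, ∑ₜ L t (T - L t), -∑ₜ L t)` has weakly V-shaped weights;
sorting positions by weight, ties broken by the distance to the valley, turns it into a V-shaped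
optimal permutation.
-/

namespace WienerMaxQAP

open Finset Function Equiv

variable {n : ℕ}

def prefixSum (F : ℕ → ℤ) (t : ℕ) : ℤ := ∑ i ∈ range (t + 1), F i

def gaps (B : ℕ → ℤ) (t : ℕ) : ℤ := B (t + 1) - B t

def cutSum (n : ℕ) (w F : ℕ → ℤ) : ℤ :=
  ∑ t ∈ range n, w t * (prefixSum F t * (∑ i ∈ range n, F i - prefixSum F t))

theorem sum_range_comp_swap_of_le (F : ℕ → ℤ) {t u : ℕ} (h : t ≤ u) :
    ∑ i ∈ range t, F (swap u (u + 1) i) = ∑ i ∈ range t, F i :=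
  sum_congr rfl fun i hi => by
    rw [mem_range] at hi
    rw [swap_apply_of_ne_of_ne (by omega) (by omega)]

theorem sum_range_comp_swap_of_lt (F : ℕ → ℤ) {t u : ℕ} (h : u + 1 < t) :
    ∑ i ∈ range t, F (swap u (u + 1) i) = ∑ i ∈ range t, F i :=
  Perm.sum_comp _ _ F fun i hi => by
    rw [Set.mem_ofPred_eq, swap_apply_ne_self_iff] at hi
    simp only [coe_range, Set.mem_Iio]
    omega

theorem prefixSum_comp_swap_of_ne (F : ℕ → ℤ) {t u : ℕ} (h : t ≠ u) :
    prefixSum (F ∘ swap u (u + 1)) t = prefixSum F t := by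
  rcases h.lt_or_gt with h | h
  · exact sum_range_comp_swap_of_le F h
  · exact sum_range_comp_swap_of_lt F (by omega)

theorem prefixSum_comp_swap_self (F : ℕ → ℤ) (u : ℕ) :
    prefixSum (F ∘ swap u (u + 1)) u = prefixSum F u - (F u - F (u + 1)) := by
  simp only [prefixSum, sum_range_succ, comp_apply, swap_apply_left,
    sum_range_comp_swap_of_le F le_rfl]
  ring

theorem sum_prefixSum_comp_swap (h : ℕ → ℤ → ℤ) (F : ℕ → ℤ) {u : ℕ} (hu : u < n) :
    ∑ t ∈ range n, h t (prefixSum (F ∘ swap u (u + 1)) t) =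
      ∑ t ∈ range n, h t (prefixSum F t) +
        (h u (prefixSum F u - (F u - F (u + 1))) - h u (prefixSum F u)) := by
  rw [← sub_eq_iff_eq_add', ← sum_sub_distrib,
    sum_eq_single_of_mem u (mem_range.2 hu) fun t _ htu => by
      rw [prefixSum_comp_swap_of_ne F htu, sub_self],
    prefixSum_comp_swap_self]

theorem cutSum_comp_swap (w F : ℕ → ℤ) {u : ℕ} (hu : u + 1 < n) :
    cutSum n w (F ∘ swap u (u + 1)) = cutSum n w F + w u * ((F u - F (u + 1)) *
      (2 * prefixSum F u - (F u - F (u + 1)) - ∑ i ∈ range n, F i)) := by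
  unfold cutSum
  rw [show ∑ i ∈ range n, (F ∘ swap u (u + 1)) i = ∑ i ∈ range n, F i from
      sum_range_comp_swap_of_lt F hu,
    sum_prefixSum_comp_swap (fun t L => w t * (L * (∑ i ∈ range n, F i - L))) F (by omega)]
  ring

theorem le_prefixSum_sub (F : ℕ → ℤ) (hF : ∀ i, 0 ≤ F i) {a i b : ℕ} (hai : a < i)
    (hib : i ≤ b) :
    F i ≤ prefixSum F b - prefixSum F a := by
  rw [prefixSum, prefixSum, ← sum_Ico_eq_sub F (by omega)]
  exact single_le_sum (fun j _ => hF j) (mem_Ico.2 ⟨hai, by omega⟩)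

theorem sum_gaps_of_le (B : ℕ → ℤ) {i j : ℕ} (hij : i ≤ j) (hj : j ≤ n) :
    ∑ t ∈ range n, (if i ≤ t ∧ ¬j ≤ t then gaps B t else 0) = B j - B i := by
  rw [← sum_filter, show {t ∈ range n | i ≤ t ∧ ¬j ≤ t} = Ico i j by ext; simp; omega,
    sum_Ico_eq_sub _ hij]
  simp only [gaps, sum_range_sub]
  ring

theorem sum_gaps_of_ge (B : ℕ → ℤ) {i j : ℕ} (hji : j ≤ i) :
    ∑ t ∈ range n, (if i ≤ t ∧ ¬j ≤ t then gaps B t else 0) = 0 :=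
  sum_eq_zero fun t _ => if_neg (by omega)

theorem abs_sub_eq_sum_gaps {B : ℕ → ℤ} (hB : MonotoneOn B (Set.Iio n)) {i j : ℕ}
    (hi : i < n) (hj : j < n) :
    |B i - B j| = ∑ t ∈ range n, (if i ≤ t ∧ ¬j ≤ t then gaps B t else 0) +
      ∑ t ∈ range n, (if j ≤ t ∧ ¬i ≤ t then gaps B t else 0) := by
  rcases le_total i j with h | h
  · rw [sum_gaps_of_le B h hj.le, sum_gaps_of_ge B h, abs_sub_comm,
      abs_of_nonneg (sub_nonneg.2 (hB hi hj h)), add_zero]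
  · rw [sum_gaps_of_ge B h, sum_gaps_of_le B h hi.le,
      abs_of_nonneg (sub_nonneg.2 (hB hj hi h)), zero_add]

theorem sum_range_sum_range_mul_sum_gaps (F B : ℕ → ℤ) :
    ∑ i ∈ range n, ∑ j ∈ range n,
      F i * F j * ∑ t ∈ range n, (if i ≤ t ∧ ¬j ≤ t then gaps B t else 0) =
        cutSum n (gaps B) F := by
  have hleft : ∀ t ∈ range n, ∑ i ∈ range n with i ≤ t, F i = prefixSum F t := fun t ht => by
    rw [prefixSum, show {i ∈ range n | i ≤ t} = range (t + 1) by ext; simp at ht ⊢; omega]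
  have hright : ∀ t ∈ range n, ∑ j ∈ range n with ¬j ≤ t, F j =
      ∑ j ∈ range n, F j - prefixSum F t := fun t ht => by
    rw [← sum_filter_add_sum_filter_not (range n) (· ≤ t), hleft t ht, add_sub_cancel_left]
  calc _ = ∑ t ∈ range n, ∑ i ∈ range n, ∑ j ∈ range n,
        gaps B t * ((if i ≤ t then F i else 0) * if ¬j ≤ t then F j else 0) := by
        simp only [mul_sum]
        refine (sum_congr rfl fun i _ => sum_comm).trans ?_
        rw [sum_comm]
        refine sum_congr rfl fun t _ => sum_congr rfl fun i _ => sum_congr rfl fun j _ => ?_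
        rw [ite_and]
        split_ifs <;> ring
    _ = ∑ t ∈ range n, gaps B t *
        ((∑ i ∈ range n with i ≤ t, F i) * ∑ j ∈ range n with ¬j ≤ t, F j) := by
        simp only [sum_filter, sum_mul_sum]
        simp only [mul_sum]
    _ = cutSum n (gaps B) F :=
        sum_congr rfl fun t ht => by rw [hleft t ht, hright t ht]

theorem sum_range_sum_range_mul_abs_sub (F B : ℕ → ℤ) (hB : MonotoneOn B (Set.Iio n)) :
    ∑ i ∈ range n, ∑ j ∈ range n, F i * F j * |B i - B j| = 2 * cutSum n (gaps B) F := by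
  rw [← sum_range_sum_range_mul_sum_gaps]
  calc _ = ∑ i ∈ range n, ∑ j ∈ range n,
        (F i * F j * ∑ t ∈ range n, (if i ≤ t ∧ ¬j ≤ t then gaps B t else 0) +
          F j * F i * ∑ t ∈ range n, (if j ≤ t ∧ ¬i ≤ t then gaps B t else 0)) :=
        sum_congr rfl fun i hi => sum_congr rfl fun j hj => by
          rw [abs_sub_eq_sum_gaps hB (mem_range.1 hi) (mem_range.1 hj)]
          ring
    _ = _ := by
        rw [two_mul]
        simp only [sum_add_distrib]
        rw [sum_comm (s := range n) (t := range n) (f := fun i j => F j * F i * _)]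

theorem monotoneOn_extend_val {b : Fin n → ℤ} (hb : Monotone b) :
    MonotoneOn (extend Fin.val b 0) (Set.Iio n) := fun i hi j hj hij => by
  rw [← Fin.val_mk hi, ← Fin.val_mk hj, Fin.val_injective.extend_apply,
    Fin.val_injective.extend_apply]
  exact hb hij

theorem sum_sum_mul_abs_sub_eq_cutSum (g b : Fin n → ℤ) (hb : Monotone b) :
    ∑ i, ∑ j, g i * g j * |b i - b j| =
      2 * cutSum n (gaps (extend Fin.val b 0)) (extend Fin.val g 0) := by
  rw [← sum_range_sum_range_mul_abs_sub _ _ (monotoneOn_extend_val hb),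
    ← Fin.sum_univ_eq_sum_range]
  simp only [← Fin.sum_univ_eq_sum_range, Fin.val_injective.extend_apply]

theorem gaps_extend_val_nonneg {b : Fin n → ℤ} (hb : Monotone b) {t : ℕ} (ht : t + 1 < n) :
    0 ≤ gaps (extend Fin.val b 0) t :=
  sub_nonneg.2 (monotoneOn_extend_val hb (show t < n by omega) ht t.le_succ)

-- `cutSum n 1` breaks the ties caused by zero gaps `w t = 0`, the last entry those caused by
-- swaps with zero gain.
def potential (n : ℕ) (w F : ℕ → ℤ) : ℤ ×ₗ ℤ ×ₗ ℤ :=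
  toLex (cutSum n w F, toLex (cutSum n 1 F, -∑ t ∈ range n, prefixSum F t))

theorem exists_potential_lt_comp_swap {w F : ℕ → ℤ} (hw : ∀ t, t + 1 < n → 0 ≤ w t)
    (hF : ∀ i, 0 ≤ F i) {a b : ℕ} (hab : a < b) (hb : b + 1 < n)
    (hasc : F a < F (a + 1)) (hdesc : F (b + 1) < F b) :
    ∃ u, u + 1 < n ∧ potential n w F < potential n w (F ∘ swap u (u + 1)) := by
  set T := ∑ i ∈ range n, F i
  -- `2 (L b - L a) ≥ F (a + 1) + F b` bounds both jumps, so if the swap at `b` loses,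
  -- the swap at `a` gains.
  have hgap₁ := le_prefixSum_sub F hF (Nat.lt_succ_self a) hab
  have hgap₂ := le_prefixSum_sub F hF hab le_rfl
  by_cases hc : 0 ≤ 2 * prefixSum F b - (F b - F (b + 1)) - T
  · refine ⟨b, hb, ?_⟩
    have hgain : 0 ≤ (F b - F (b + 1)) * (2 * prefixSum F b - (F b - F (b + 1)) - T) :=
      mul_nonneg (by linarith) hc
    rw [potential, potential, cutSum_comp_swap _ _ hb, cutSum_comp_swap _ _ hb,
      sum_prefixSum_comp_swap (fun _ L => L) F (by omega), Pi.one_apply, one_mul]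
    refine Prod.Lex.toLex_strictMono (Prod.mk_lt_mk_of_le_of_lt
      (le_add_of_nonneg_right (mul_nonneg (hw b hb) hgain)) ?_)
    exact Prod.Lex.toLex_strictMono (Prod.mk_lt_mk_of_le_of_lt
      (le_add_of_nonneg_right hgain) (by linarith))
  · refine ⟨a, by omega, ?_⟩
    have hgain : 0 < (F a - F (a + 1)) * (2 * prefixSum F a - (F a - F (a + 1)) - T) :=
      mul_pos_of_neg_of_neg (by linarith) (by linarith [hF a, hF (b + 1)])
    rw [potential, potential, cutSum_comp_swap _ _ (by omega), cutSum_comp_swap _ _ (by omega),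
      Pi.one_apply, one_mul]
    refine Prod.Lex.toLex_strictMono (Prod.mk_lt_mk_of_le_of_lt
      (le_add_of_nonneg_right (mul_nonneg (hw a (by omega)) hgain.le)) ?_)
    exact Prod.Lex.toLex_lt_toLex.2 (Or.inl (lt_add_of_pos_right _ hgain))

theorem exists_antitoneOn_monotoneOn {γ : Type*} [LinearOrder γ] {F : ℕ → γ}
    (hn : 0 < n) (h : ∀ a b, a < b → b + 1 < n → F a < F (a + 1) → F b ≤ F (b + 1)) :
    ∃ m < n, AntitoneOn F (Set.Iic m) ∧ MonotoneOn F (Set.Ico m n) := by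
  classical
  have hex : ∃ a, n ≤ a + 1 ∨ F a < F (a + 1) := ⟨n - 1, Or.inl (by omega)⟩
  have hm := Nat.find_spec hex
  have hmin : ∀ i < Nat.find hex, ¬(n ≤ i + 1 ∨ F i < F (i + 1)) := fun i => Nat.find_min hex
  have hlt : Nat.find hex < n :=
    (Nat.find_min' hex (Or.inl (show n ≤ n - 1 + 1 by omega))).trans_lt (by omega)
  refine ⟨Nat.find hex, hlt, ?_, ?_⟩
  · refine antitoneOn_of_succ_le Set.ordConnected_Iic fun i _ _ hi => ?_
    rw [Order.succ_eq_add_one, Set.mem_Iic] at hi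
    exact not_lt.1 fun hasc => hmin i (by omega) (Or.inr hasc)
  · refine monotoneOn_of_le_succ Set.ordConnected_Ico fun i _ hi hi' => ?_
    rw [Order.succ_eq_add_one, Set.mem_Ico] at hi'
    rw [Set.mem_Ico] at hi
    have hasc : F (Nat.find hex) < F (Nat.find hex + 1) := hm.resolve_left (by omega)
    rcases hi.1.eq_or_lt with hi | hi
    · exact hi ▸ hasc.le
    · exact h _ _ hi hi'.2 hasc

theorem exists_perm_lt_iff_lt {γ : Type*} [LinearOrder γ] (κ : Fin n → γ)
    (hκ : Injective κ) : ∃ σ : Perm (Fin n), ∀ p q, σ p < σ q ↔ κ p < κ q := by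
  have hs : StrictMono (κ ∘ Tuple.sort κ) :=
    (Tuple.monotone_sort κ).strictMono_of_injective (hκ.comp (Tuple.sort κ).injective)
  refine ⟨(Tuple.sort κ)⁻¹, fun p q => ?_⟩
  simp only [← hs.lt_iff_lt, comp_apply, Perm.coe_inv, apply_symm_apply]

theorem comp_eq_of_lt_imp_le {γ : Type*} [PartialOrder γ] {α : Fin n → γ}
    (hα : Monotone α) {π₀ σ : Perm (Fin n)} (h : ∀ p q, σ p < σ q → α (π₀ p) ≤ α (π₀ q)) :
    α ∘ σ = α ∘ π₀ := by
  have hmono : Monotone (α ∘ ⇑(π₀ * σ⁻¹)) := fun x y hxy => by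
    obtain rfl | hlt := hxy.eq_or_lt
    · rfl
    · exact h _ _ (by simpa using hlt)
  have := Tuple.unique_monotone hmono (τ := 1) (by simpa using hα)
  funext p
  simpa using (congrFun this (σ p)).symm

theorem exists_perm_strictAntiOn_strictMonoOn {γ : Type*} [LinearOrder γ]
    {α : Fin n → γ} (hα : Monotone α) (π₀ : Perm (Fin n)) {m : Fin n}
    (hanti : AntitoneOn (α ∘ π₀) (Set.Iic m)) (hmono : MonotoneOn (α ∘ π₀) (Set.Ici m)) :
    ∃ π : Perm (Fin n), α ∘ π = α ∘ π₀ ∧ StrictAntiOn π (Set.Iic m) ∧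
      StrictMonoOn π (Set.Ici m) := by
  -- Equal weights are ordered by distance to `m`, the left side first.
  let c : Fin n → ℕ := fun p => if p ≤ m then 2 * (m - p : ℕ) else 2 * (p - m : ℕ) - 1
  have hc_inj : Injective c := fun p q h => by
    simp only [c, Fin.le_def] at h
    split_ifs at h <;> omega
  let κ : Fin n → γ ×ₗ ℕ := fun p => toLex (α (π₀ p), c p)
  obtain ⟨π, hπ⟩ :=
    exists_perm_lt_iff_lt κ fun p q h => hc_inj (congrArg (fun x => (ofLex x).2) h)
  refine ⟨π, comp_eq_of_lt_imp_le hα fun p q h => Prod.Lex.monotone_fst _ _ ((hπ p q).1 h).le,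
    fun p hp q hq hpq => (hπ q p).2 ?_, fun p hp q hq hpq => (hπ p q).2 ?_⟩
  · refine Prod.Lex.toLex_strictMono (Prod.mk_lt_mk_of_le_of_lt (hanti hp hq hpq.le) ?_)
    simp only [Set.mem_Iic, Fin.le_def, Fin.lt_def] at hp hq hpq
    simp only [c, Fin.le_def, if_pos hp, if_pos hq]
    omega
  · refine Prod.Lex.toLex_strictMono (Prod.mk_lt_mk_of_le_of_lt (hmono hp hq hpq.le) ?_)
    simp only [Set.mem_Ici, Fin.le_def, Fin.lt_def] at hp hq hpq
    simp only [c, Fin.le_def]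
    split_ifs <;> omega

theorem extend_comp_swap {α β γ : Type*} [DecidableEq α] [DecidableEq β] {f : α → β}
    (hf : Injective f) (g : α → γ) (e : β → γ) (a b : α) :
    extend f (g ∘ swap a b) e = extend f g e ∘ swap (f a) (f b) := by
  funext y
  by_cases hy : ∃ x, f x = y
  · obtain ⟨x, rfl⟩ := hy
    rw [hf.extend_apply, comp_apply, comp_apply, hf.swap_apply, hf.extend_apply]
  · rw [extend_apply' _ _ _ hy, comp_apply,
      swap_apply_of_ne_of_ne (fun h => hy ⟨a, h.symm⟩) (fun h => hy ⟨b, h.symm⟩),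
      extend_apply' _ _ _ hy]

noncomputable def weights (α : Fin n → ℕ) (σ : Perm (Fin n)) : ℕ → ℤ :=
  extend Fin.val (fun i => (α (σ i) : ℤ)) 0

theorem weights_val (α : Fin n → ℕ) (σ : Perm (Fin n)) (i : Fin n) :
    weights α σ i = α (σ i) :=
  Fin.val_injective.extend_apply _ _ _

theorem weights_nonneg (α : Fin n → ℕ) (σ : Perm (Fin n)) (i : ℕ) :
    0 ≤ weights α σ i := by
  simp only [weights, extend]
  split_ifs <;> simp

theorem weights_mul_swap (α : Fin n → ℕ) (σ : Perm (Fin n)) {u : ℕ} (hu : u + 1 < n) :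
    weights α (σ * Equiv.swap ⟨u, Nat.lt_of_succ_lt hu⟩ ⟨u + 1, hu⟩) =
      weights α σ ∘ swap u (u + 1) :=
  extend_comp_swap Fin.val_injective (fun i => (α (σ i) : ℤ)) 0 _ _

theorem exists_optimal_antitoneOn_monotoneOn (hn : 0 < n) (α : Fin n → ℕ)
    (β : Fin n → ℤ) (hβ : Monotone β) :
    ∃ π₀ : Perm (Fin n),
      (∀ σ : Perm (Fin n), ∑ i, ∑ j, (α (σ i) : ℤ) * (α (σ j) : ℤ) * |β i - β j| ≤
        ∑ i, ∑ j, (α (π₀ i) : ℤ) * (α (π₀ j) : ℤ) * |β i - β j|) ∧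
      ∃ m : Fin n, AntitoneOn (fun i => (α (π₀ i) : ℤ)) (Set.Iic m) ∧
        MonotoneOn (fun i => (α (π₀ i) : ℤ)) (Set.Ici m) := by
  let w := gaps (extend Fin.val β 0)
  obtain ⟨π₀, -, hmax⟩ :=
    exists_max_image univ (fun σ => potential n w (weights α σ)) univ_nonempty
  refine ⟨π₀, fun σ => ?_, ?_⟩
  · rw [sum_sum_mul_abs_sub_eq_cutSum _ _ hβ, sum_sum_mul_abs_sub_eq_cutSum _ _ hβ]
    exact mul_le_mul_of_nonneg_left (Prod.Lex.monotone_fst _ _ (hmax σ (mem_univ σ))) two_pos.le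
  obtain ⟨m, hm, hanti, hmono⟩ := exists_antitoneOn_monotoneOn hn fun a b hab hb hasc => by
    by_contra! hdesc
    obtain ⟨u, hu, hlt⟩ := exists_potential_lt_comp_swap (fun t => gaps_extend_val_nonneg hβ)
      (weights_nonneg α π₀) hab hb hasc hdesc
    exact (hmax _ (mem_univ _)).not_gt (weights_mul_swap α π₀ hu ▸ hlt)
  refine ⟨⟨m, hm⟩, fun p hp q hq hpq => ?_, fun p hp q hq hpq => ?_⟩
  · simpa only [weights_val] using hanti hp hq hpq
  · simpa only [weights_val] using hmono ⟨hp, p.isLt⟩ ⟨hq, q.isLt⟩ hpq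

end WienerMaxQAP

/-- Every instance of the Wiener Max-QAP (product matrix from
nondecreasing nonnegative integers α, 1D-distance matrix from nondecreasing
integers β) has an optimal permutation that is V-shaped: π is strictly
decreasing up to some position ℓ and strictly increasing from ℓ on.
(Positions are 0-based; the 1-indexed position p corresponds to index p−1.) -/
theorem stmt4 (n : ℕ) (hn : 1 ≤ n)
    (α : Fin n → ℕ) (hα : Monotone α)
    (β : Fin n → ℤ) (hβ : Monotone β) :
    ∃ π : Equiv.Perm (Fin n),
      (∀ σ : Equiv.Perm (Fin n),
        (∑ i, ∑ j, (α (σ i) : ℤ) * (α (σ j) : ℤ) * |β i - β j|) ≤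
          ∑ i, ∑ j, (α (π i) : ℤ) * (α (π j) : ℤ) * |β i - β j|) ∧
      ∃ ℓ : ℕ, 1 ≤ ℓ ∧ ℓ ≤ n ∧
        (∀ i : ℕ, ∀ hi : i + 1 < n, i + 2 ≤ ℓ →
          π ⟨i + 1, hi⟩ < π ⟨i, by omega⟩) ∧
        (∀ i : ℕ, ∀ hi : i + 1 < n, ℓ ≤ i + 1 →
          π ⟨i, by omega⟩ < π ⟨i + 1, hi⟩) := by
  obtain ⟨π₀, hopt, m, hanti, hmono⟩ :=
    WienerMaxQAP.exists_optimal_antitoneOn_monotoneOn hn α β hβ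
  obtain ⟨π, hπ, hdec, hinc⟩ := WienerMaxQAP.exists_perm_strictAntiOn_strictMonoOn
    (α := fun k => (α k : ℤ)) (Nat.mono_cast.comp hα) π₀ hanti hmono
  refine ⟨π, fun σ => ?_, m + 1, by omega, by omega, fun i hi hi' => ?_, fun i hi hi' => ?_⟩
  · have hval := congrFun hπ
    simp only [Function.comp_apply] at hval
    simpa only [hval] using hopt σ
  · exact hdec (show i ≤ (m : ℕ) by omega) (show i + 1 ≤ (m : ℕ) by omega) (Nat.lt_succ_self i)
  · exact hinc (show (m : ℕ) ≤ i by omega) (show (m : ℕ) ≤ i + 1 by omega) (Nat.lt_succ_self i)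
end

section
/- If real numbers L, R, a, b, c with a < c, b < c, and a, b ≥ 0 satisfy both c + R − L ≤ 0 being implied by (c−a)(β_k−β_{k−1})(b+R−L) ≤ 0 with β_{k−1} < β_k, and (c−b)(β_{k+1}−β_k)(a−R+L) ≤ 0 with β_k < β_{k+1}, then a + b ≤ 0; hence if additionally a > 0 or b > 0, no such configuration exists. -/
/-!
Both differences in each exchange inequality are positive, so each inequality just says that its
last factor is nonpositive: `b + R - L ≤ 0` and `a - R + L ≤ 0`. Adding them cancels `R - L`.
-/

theorem nonpos_of_sub_mul_sub_mul_nonpos {α : Type*} [Ring α] [LinearOrder α]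
    [IsStrictOrderedRing α] {x y u v w : α} (hxy : x < y) (huv : u < v)
    (h : (y - x) * (v - u) * w ≤ 0) : w ≤ 0 :=
  nonpos_of_mul_nonpos_right h (mul_pos (sub_pos.mpr hxy) (sub_pos.mpr huv))

theorem stmt5_general (L R a b c β₁ β₂ β₃ : ℝ)
    (ha : 0 ≤ a) (hb : 0 ≤ b)
    (hac : a < c) (hbc : b < c) (h12 : β₁ < β₂) (h23 : β₂ < β₃)
    (h1 : (c - a) * (β₂ - β₁) * (b + R - L) ≤ 0)
    (h2 : (c - b) * (β₃ - β₂) * (a - R + L) ≤ 0) :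
    a + b ≤ 0 ∧ ¬ (0 < a ∨ 0 < b) := by
  have hleft : b + R - L ≤ 0 := nonpos_of_sub_mul_sub_mul_nonpos hac h12 h1
  have hright : a - R + L ≤ 0 := nonpos_of_sub_mul_sub_mul_nonpos hbc h23 h2
  have hab : a + b ≤ 0 := by linarith
  refine ⟨hab, ?_⟩
  rintro (hpos | hpos) <;> linarith

/-- The exchange-argument arithmetic ruling out a strict local
maximum: if a,b are nonnegative, a < c, b < c, β_{k-1} < β_k < β_{k+1},
L,R ≥ 0, and both exchange inequalities
(c−a)(β_k−β_{k−1})(b+R−L) ≤ 0 and (c−b)(β_{k+1}−β_k)(a−R+L) ≤ 0 hold,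
then a + b ≤ 0; hence (since a,b ≥ 0) no such configuration with a > 0 or
b > 0 exists. -/
theorem stmt5 (L R a b c β₁ β₂ β₃ : ℝ)
    (hL : 0 ≤ L) (hR : 0 ≤ R) (ha : 0 ≤ a) (hb : 0 ≤ b)
    (hac : a < c) (hbc : b < c) (h12 : β₁ < β₂) (h23 : β₂ < β₃)
    (h1 : (c - a) * (β₂ - β₁) * (b + R - L) ≤ 0)
    (h2 : (c - b) * (β₃ - β₂) * (a - R + L) ≤ 0) :
    a + b ≤ 0 ∧ ¬ (0 < a ∨ 0 < b) :=
  stmt5_general L R a b c β₁ β₂ β₃ ha hb hac hbc h12 h23 h1 h2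
end

section
/- Let T be a caterpillar with backbone vertices v_1,…,v_n in path order (n ≥ 1), where v_i is adjacent to exactly ℓ_i leaves. Then the Wiener index of T equals (Σ_{i=1}^n ℓ_i)² + (n−1)·Σ_{i=1}^n ℓ_i + (1/2)·Σ_{i=1}^n Σ_{j=1}^n (ℓ_i+1)(ℓ_j+1)|i−j|. -/
/-- The caterpillar tree with backbone vertices `v_1, …, v_n` (in path order),
where the backbone vertex `v_i` is additionally adjacent to `ℓ i` leaves. -/
def caterpillar (n : ℕ) (ℓ : Fin n → ℕ) :
    SimpleGraph ((Fin n) ⊕ (Σ i : Fin n, Fin (ℓ i))) :=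
  SimpleGraph.fromRel (fun x y =>
    match x, y with
    | Sum.inl i, Sum.inl j => (i : ℕ) + 1 = (j : ℕ)
    | Sum.inl i, Sum.inr ⟨j, _⟩ => i = j
    | _, _ => False)

/-- The Wiener index: the sum of the distances over all unordered pairs of
vertices (each ordered pair is counted once in the double sum, hence the ½). -/
noncomputable def wienerIndex {V : Type*} [Fintype V] (G : SimpleGraph V) : ℚ :=
  (∑ u, ∑ v, (G.dist u v : ℚ)) / 2

/-! In a caterpillar, two distinct vertices `u`, `v` are at distance
`|π u - π v| + h u + h v`, where `π` projects a leaf to its backbone vertex and `h` is `1` on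
leaves and `0` on the backbone. This formula vanishes on the diagonal, grows by at most one
along an edge and is attained by an explicit walk, so it is the graph distance. Summed over
all ordered pairs, the backbone term weighs `|i - j|` by the fibre sizes `(ℓ i + 1) (ℓ j + 1)`,
the height terms give `2 (n + Σ ℓ) Σ ℓ`, and the diagonal, where the formula would give
`2 h u`, takes back `2 Σ ℓ`. -/

namespace SimpleGraph

variable {V : Type*} {G : SimpleGraph V}

theorem le_length_of_forall_adj_le {f : V → V → ℕ} (hself : ∀ v, f v v = 0)
    (hadj : ∀ ⦃u w⦄, G.Adj u w → ∀ v, f u v ≤ f w v + 1) {u v : V} (p : G.Walk u v) :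
    f u v ≤ p.length := by
  induction p with
  | nil => simp [hself]
  | cons h p ih => grw [Walk.length_cons, hadj h, ih]

theorem dist_eq_of_forall_adj_le {f : V → V → ℕ} (hself : ∀ v, f v v = 0)
    (hadj : ∀ ⦃u w⦄, G.Adj u w → ∀ v, f u v ≤ f w v + 1)
    (hwalk : ∀ u v, ∃ p : G.Walk u v, p.length = f u v) (u v : V) :
    G.dist u v = f u v := by
  obtain ⟨p, hp⟩ := hwalk u v
  obtain ⟨q, hq⟩ := p.reachable.exists_walk_length_eq_dist
  exact le_antisymm (hp ▸ dist_le p) (hq ▸ le_length_of_forall_adj_le hself hadj q)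

end SimpleGraph

theorem Nat.cast_dist {R : Type*} [Ring R] [LinearOrder R] [IsOrderedRing R] (a b : ℕ) :
    (a.dist b : R) = |(a : R) - b| := by
  rcases le_total a b with h | h
  · rw [Nat.dist_eq_sub_of_le h, Nat.cast_sub h, abs_sub_comm,
      abs_of_nonneg (sub_nonneg.mpr (Nat.mono_cast h))]
  · rw [Nat.dist_comm, Nat.dist_eq_sub_of_le h, Nat.cast_sub h,
      abs_of_nonneg (sub_nonneg.mpr (Nat.mono_cast h))]

namespace Caterpillar

open SimpleGraph

variable {n : ℕ} {ℓ : Fin n → ℕ}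

def backbone : Fin n ⊕ (Σ i, Fin (ℓ i)) → Fin n := Sum.elim id Sigma.fst

def height : Fin n ⊕ (Σ i, Fin (ℓ i)) → ℕ := Sum.elim (fun _ ↦ 0) (fun _ ↦ 1)

def distFormula (u v : Fin n ⊕ (Σ i, Fin (ℓ i))) : ℕ :=
  if u = v then 0 else Nat.dist (backbone u) (backbone v) + height u + height v

theorem dist_backbone_add_height_add_height_of_adj {u w : Fin n ⊕ (Σ i, Fin (ℓ i))}
    (h : (caterpillar n ℓ).Adj u w) :
    Nat.dist (backbone u) (backbone w) + height u + height w = 1 := by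
  obtain ⟨-, h | h⟩ := (fromRel_adj _ _ _).mp h <;>
    rcases u with i | ⟨i, a⟩ <;> rcases w with j | ⟨j, b⟩ <;>
    simp_all [backbone, height, Nat.dist] <;> omega

theorem distFormula_le_of_adj {u w : Fin n ⊕ (Σ i, Fin (ℓ i))} (h : (caterpillar n ℓ).Adj u w)
    (v : Fin n ⊕ (Σ i, Fin (ℓ i))) : distFormula u v ≤ distFormula w v + 1 := by
  have hadj := dist_backbone_add_height_add_height_of_adj h
  have htri := Nat.dist.triangle_inequality (backbone u) (backbone w) (backbone v)
  unfold distFormula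
  split_ifs with huv hwv hwv <;> subst_vars <;> omega

theorem exists_backbone_walk_of_add_eq (d : ℕ) {i j : Fin n} (h : (i : ℕ) + d = j) :
    ∃ p : (caterpillar n ℓ).Walk (.inl i) (.inl j), p.length = d := by
  induction d generalizing j with
  | zero =>
    obtain rfl : i = j := Fin.ext (by simpa using h)
    exact ⟨.nil, rfl⟩
  | succ d ih =>
    obtain ⟨p, hp⟩ := ih (j := ⟨i + d, by omega⟩) rfl
    have hadj : (caterpillar n ℓ).Adj (.inl ⟨i + d, by omega⟩) (.inl j) :=
      (fromRel_adj _ _ _).mpr ⟨by simp [Fin.ext_iff]; omega, .inl (by simp; omega)⟩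
    exact ⟨p.concat hadj, by simp [hp]⟩

theorem exists_backbone_walk (i j : Fin n) :
    ∃ p : (caterpillar n ℓ).Walk (.inl i) (.inl j), p.length = Nat.dist i j := by
  rcases le_total (i : ℕ) j with h | h
  · exact exists_backbone_walk_of_add_eq _ (by rw [Nat.dist_eq_sub_of_le h]; omega)
  · obtain ⟨p, hp⟩ := exists_backbone_walk_of_add_eq (ℓ := ℓ) (i := j) (j := i) (Nat.dist i j)
      (by rw [Nat.dist_comm, Nat.dist_eq_sub_of_le h]; omega)
    exact ⟨p.reverse, by simp [hp]⟩

theorem adj_leaf (i : Fin n) (a : Fin (ℓ i)) :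
    (caterpillar n ℓ).Adj (.inl i) (.inr ⟨i, a⟩) :=
  (fromRel_adj _ _ _).mpr ⟨by simp, .inl rfl⟩

theorem exists_walk_length_eq_distFormula (u v : Fin n ⊕ (Σ i, Fin (ℓ i))) :
    ∃ p : (caterpillar n ℓ).Walk u v, p.length = distFormula u v := by
  by_cases huv : u = v
  · subst huv
    exact ⟨.nil, by simp [distFormula]⟩
  rw [distFormula, if_neg huv]
  rcases u with i | ⟨i, a⟩ <;> rcases v with j | ⟨j, b⟩ <;>
    obtain ⟨p, hp⟩ := exists_backbone_walk (ℓ := ℓ) i j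
  · exact ⟨p, hp⟩
  · exact ⟨p.concat (adj_leaf j b), by rw [Walk.length_concat, hp]; rfl⟩
  · exact ⟨.cons (adj_leaf i a).symm p, by rw [Walk.length_cons, hp]; rfl⟩
  · exact ⟨.cons (adj_leaf i a).symm (p.concat (adj_leaf j b)), by
      rw [Walk.length_cons, Walk.length_concat, hp]; rfl⟩

theorem dist_caterpillar (u v : Fin n ⊕ (Σ i, Fin (ℓ i))) :
    (caterpillar n ℓ).dist u v = distFormula u v :=
  dist_eq_of_forall_adj_le (by simp [distFormula]) (fun _ _ ↦ distFormula_le_of_adj)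
    exists_walk_length_eq_distFormula u v

theorem sum_comp_backbone {R : Type*} [NonAssocSemiring R] (g : Fin n → R) :
    ∑ u : Fin n ⊕ (Σ i, Fin (ℓ i)), g (backbone u) = ∑ i, ((ℓ i : R) + 1) * g i := by
  simp [Fintype.sum_sum_type, backbone, Fintype.sum_sigma, add_mul, Finset.sum_add_distrib,
    add_comm]

theorem sum_height {R : Type*} [AddCommMonoidWithOne R] :
    ∑ u : Fin n ⊕ (Σ i, Fin (ℓ i)), (height u : R) = ∑ i, (ℓ i : R) := by
  simp [Fintype.sum_sum_type, height]

theorem cast_distFormula (u v : Fin n ⊕ (Σ i, Fin (ℓ i))) :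
    (distFormula u v : ℚ) = |((backbone u : ℕ) : ℚ) - (backbone v : ℕ)| + height u + height v -
      if u = v then 2 * (height u : ℚ) else 0 := by
  unfold distFormula
  split_ifs with h
  · subst h; simp; ring
  · simp [Nat.cast_dist]

theorem sum_sum_abs_backbone :
    ∑ u : Fin n ⊕ (Σ i, Fin (ℓ i)), ∑ v : Fin n ⊕ (Σ i, Fin (ℓ i)),
        |((backbone u : ℕ) : ℚ) - (backbone v : ℕ)| =
      ∑ i, ∑ j, ((ℓ i : ℚ) + 1) * ((ℓ j : ℚ) + 1) * |((i : ℕ) : ℚ) - (j : ℕ)| := by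
  calc _ = ∑ u : Fin n ⊕ (Σ i, Fin (ℓ i)),
        ∑ j, ((ℓ j : ℚ) + 1) * |((backbone u : ℕ) : ℚ) - (j : ℕ)| :=
        Finset.sum_congr rfl fun u _ ↦
          sum_comp_backbone fun j : Fin n ↦ |((backbone u : ℕ) : ℚ) - (j : ℕ)|
    _ = ∑ i, ((ℓ i : ℚ) + 1) * ∑ j, ((ℓ j : ℚ) + 1) * |((i : ℕ) : ℚ) - (j : ℕ)| :=
        sum_comp_backbone fun i : Fin n ↦ ∑ j, ((ℓ j : ℚ) + 1) * |((i : ℕ) : ℚ) - (j : ℕ)|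
    _ = _ := by simp only [Finset.mul_sum, mul_assoc]

theorem sum_sum_distFormula :
    ∑ u : Fin n ⊕ (Σ i, Fin (ℓ i)), ∑ v, (distFormula u v : ℚ) =
      ∑ i, ∑ j, ((ℓ i : ℚ) + 1) * ((ℓ j : ℚ) + 1) * |((i : ℕ) : ℚ) - (j : ℕ)| +
        2 * (n + ∑ i, (ℓ i : ℚ)) * ∑ i, (ℓ i : ℚ) - 2 * ∑ i, (ℓ i : ℚ) := by
  simp only [cast_distFormula, Finset.sum_sub_distrib, Finset.sum_add_distrib, Finset.sum_ite_eq,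
    Finset.mem_univ, if_true, Finset.sum_const, Finset.card_univ, ← Finset.mul_sum,
    sum_height, sum_sum_abs_backbone, nsmul_eq_mul, Fintype.card_sum, Fintype.card_sigma,
    Fintype.card_fin, Nat.cast_add, Nat.cast_sum]
  ring

end Caterpillar

theorem stmt6_general (n : ℕ) (ℓ : Fin n → ℕ) :
    wienerIndex (caterpillar n ℓ) =
      (∑ i, (ℓ i : ℚ)) ^ 2 + ((n : ℚ) - 1) * (∑ i, (ℓ i : ℚ)) +
        (1 / 2) * ∑ i, ∑ j, ((ℓ i : ℚ) + 1) * ((ℓ j : ℚ) + 1) *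
          |((i : ℕ) : ℚ) - ((j : ℕ) : ℚ)| := by
  rw [wienerIndex]
  simp only [Caterpillar.dist_caterpillar, Caterpillar.sum_sum_distFormula]
  ring

/-- the Wiener index of a caterpillar with backbone v_1,…,v_n and
leaf numbers ℓ_1,…,ℓ_n equals
(Σℓ_i)² + (n−1)·Σℓ_i + ½·Σ_i Σ_j (ℓ_i+1)(ℓ_j+1)|i−j|. -/
theorem stmt6 (n : ℕ) (hn : 1 ≤ n) (ℓ : Fin n → ℕ) :
    wienerIndex (caterpillar n ℓ) =
      (∑ i, (ℓ i : ℚ)) ^ 2 + ((n : ℚ) - 1) * (∑ i, (ℓ i : ℚ)) +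
        (1 / 2) * ∑ i, ∑ j, ((ℓ i : ℚ) + 1) * ((ℓ j : ℚ) + 1) *
          |((i : ℕ) : ℚ) - ((j : ℕ) : ℚ)| :=
  stmt6_general n ℓ
end

section
/- The dynamic programming recursion is correct: for k ≥ 2, with M = Σ_{i=1}^{k−1} α_i, the optimal value Z(k,m,L,R) of the constrained (k+2)-dimensional Wiener Max-QAP equals max{ Z(k−1, m+1, L+α_k, R) + 2(L+α_k)(M+R)(β_{m+1}−β_m), Z(k−1, m, L, R+α_k) + 2(L+M)(R+α_k)(β_{m+k−1}−β_{m+k−2}) }. -/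
/-!
The objective is a sum over the gaps `[β (m + g), β (m + g + 1)]` between consecutive points:
each gap contributes twice its length times the product of the total weight on its left
(including `L`) and on its right (including `R`). Fix the arrangement of `α 1, …, α (k - 1)` and
insert the largest weight `α k` at position `t`. Moving it one step to the right changes only the
term of the gap it crosses, by the gap length times `α k - w` (with `w` the weight it passes) times
a factor `D t` that is nondecreasing in `t`. So the objective is V-shaped in `t` and is maximal
with `α k` at `β m` or at `β (m + k - 1)`.
There `α k` merges with `L` (resp. `R`), the outermost gap contributes
`2 (L + α k) (M + R) (β (m + 1) - β m)` (resp. its mirror image), and the remaining gaps form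
the objective of the smaller state.
-/

/-- The objective value of the constrained (k+2)-dimensional Wiener Max-QAP of
state (k,m,L,R) under the bijection σ assigning the values α_1,…,α_k
(represented by σ : Fin k ≃ Fin k, value α (σ s + 1)) to the points
β_m,…,β_{m+k−1}, with the extra value L fixed at β_m and R fixed at β_{m+k−1}. -/
def stateVal (α β : ℕ → ℤ) (k m : ℕ) (L R : ℤ) (σ : Equiv.Perm (Fin k)) : ℤ :=
  (∑ s : Fin k, ∑ t : Fin k,
      α ((σ s : ℕ) + 1) * α ((σ t : ℕ) + 1) * |β (m + (s : ℕ)) - β (m + (t : ℕ))|)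
  + 2 * L * R * (β (m + k - 1) - β m)
  + 2 * (∑ s : Fin k, α ((σ s : ℕ) + 1) * L * (β (m + (s : ℕ)) - β m))
  + 2 * (∑ s : Fin k, α ((σ s : ℕ) + 1) * R * (β (m + k - 1) - β (m + (s : ℕ))))

/-- Z(k,m,L,R): the optimal value of the state (k,m,L,R). -/
noncomputable def stateOpt (α β : ℕ → ℤ) (k m : ℕ) (L R : ℤ) : ℤ :=
  Finset.univ.sup' Finset.univ_nonempty (stateVal α β k m L R)

open Finset

/-- As `c ≥ 0` and `D` is monotone, the increments of `F` change sign at most once, from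
nonpositive to nonnegative. -/
lemma le_max_of_increment_eq_mul_monotone {F c D : ℕ → ℤ} {n : ℕ}
    (hc : ∀ t < n, 0 ≤ c t) (hD : Monotone D) (hF : ∀ t < n, F (t + 1) = F t + c t * D t)
    {r : ℕ} (hr : r ≤ n) : F r ≤ max (F 0) (F n) := by
  rcases le_or_gt 0 (D r) with hDr | hDr
  · suffices ∀ t, r ≤ t → t ≤ n → F r ≤ F t from le_max_of_le_right (this n hr le_rfl)
    intro t hrt
    induction t, hrt using Nat.le_induction with
    | base => exact fun _ => le_rfl
    | succ t hrt ih =>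
      intro htn
      have := mul_nonneg (hc t (by omega)) (hDr.trans (hD hrt))
      linarith [ih (by omega), hF t (by omega)]
  · suffices ∀ t ≤ r, F t ≤ F 0 from le_max_of_le_left (this r le_rfl)
    intro t htr
    induction t with
    | zero => exact le_rfl
    | succ t ih =>
      have := mul_nonpos_of_nonneg_of_nonpos (hc t (by omega))
        ((hD (show t ≤ r by omega)).trans hDr.le)
      linarith [ih (by omega), hF t (by omega)]

section Cuts

variable {k n : ℕ}

def prefixSum (a : Fin k → ℤ) (t : ℕ) : ℤ :=
  ∑ s : Fin k, if (s : ℕ) < t then a s else 0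

lemma prefixSum_zero (a : Fin k → ℤ) : prefixSum a 0 = 0 := by
  simp [prefixSum]

lemma prefixSum_of_le (a : Fin k → ℤ) {t : ℕ} (ht : k ≤ t) :
    prefixSum a t = ∑ s, a s :=
  sum_congr rfl fun s _ => if_pos (by omega)

lemma prefixSum_succ (a : Fin k → ℤ) (t : Fin k) :
    prefixSum a (t + 1) = prefixSum a t + a t := by
  rw [prefixSum, prefixSum, ← Fintype.sum_ite_eq' t a, ← sum_add_distrib]
  exact sum_congr rfl fun s _ => by grind

lemma prefixSum_mono {a : Fin k → ℤ} (ha : ∀ s, 0 ≤ a s) : Monotone (prefixSum a) :=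
  fun _ _ h => sum_le_sum fun s _ => by split_ifs <;> first | exact le_rfl | exact ha s | omega

lemma Fin.val_succAbove_eq_ite (r : Fin (n + 1)) (s : Fin n) :
    (r.succAbove s : ℕ) = if (s : ℕ) < r then (s : ℕ) else s + 1 := by
  simp only [Fin.succAbove, Fin.lt_def, Fin.val_castSucc]
  split_ifs <;> rfl

lemma prefixSum_insertNth (x : ℤ) (b : Fin n → ℤ) (r : Fin (n + 1)) (g : ℕ) :
    prefixSum (Fin.insertNth r x b) (g + 1) =
      if g < r then prefixSum b (g + 1) else x + prefixSum b g := by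
  rw [prefixSum, Fin.sum_univ_succAbove _ r, Fin.insertNth_apply_same]
  simp only [Fin.insertNth_apply_succAbove]
  by_cases hg : g < r
  · rw [if_neg (by omega), if_pos hg, zero_add]
    refine sum_congr rfl fun s _ => ?_
    simp only [Fin.val_succAbove_eq_ite]
    split_ifs <;> first | rfl | omega
  · rw [if_pos (by omega), if_neg hg]
    refine congrArg (x + ·) (sum_congr rfl fun s _ => ?_)
    simp only [Fin.val_succAbove_eq_ite]
    split_ifs <;> first | rfl | omega

def cutObjective (d : ℕ → ℤ) (L R : ℤ) (a : Fin k → ℤ) : ℤ :=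
  ∑ g ∈ range (k - 1),
    d g * ((L + prefixSum a (g + 1)) * (R + ∑ s, a s - prefixSum a (g + 1)))

def insertCutObjective (d : ℕ → ℤ) (L R x : ℤ) (b : Fin n → ℤ) (t : ℕ) : ℤ :=
  ∑ g ∈ range n, d g *
    ((L + if g < t then prefixSum b (g + 1) else x + prefixSum b g) *
      (R + x + ∑ s, b s - if g < t then prefixSum b (g + 1) else x + prefixSum b g))

lemma cutObjective_insertNth (d : ℕ → ℤ) (L R x : ℤ) (b : Fin n → ℤ) (r : Fin (n + 1)) :
    cutObjective d L R (Fin.insertNth r x b) = insertCutObjective d L R x b r := by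
  simp only [cutObjective, insertCutObjective, prefixSum_insertNth, Fin.sum_insertNth,
    Nat.add_sub_cancel, add_assoc]

lemma insertCutObjective_succ (d : ℕ → ℤ) (L R x : ℤ) (b : Fin n → ℤ) (t : Fin n) :
    insertCutObjective d L R x b (t + 1) = insertCutObjective d L R x b t +
      d t * (x - b t) * (L + prefixSum b t + prefixSum b (t + 1) - R - ∑ s, b s) := by
  rw [← sub_eq_iff_eq_add', insertCutObjective, insertCutObjective, ← sum_sub_distrib,
    sum_eq_single_of_mem (t : ℕ) (mem_range.2 t.isLt)]
  · simp only [lt_add_iff_pos_right, zero_lt_one, if_true, lt_irrefl, if_false,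
      prefixSum_succ]
    ring
  · intro g _ hg
    have : g < t + 1 ↔ g < t := by omega
    simp only [this, sub_self]

lemma cutObjective_insertNth_le_max {d : ℕ → ℤ} (hd : ∀ g, 0 ≤ d g) (L R : ℤ) {x : ℤ}
    {b : Fin n → ℤ} (hb : ∀ s, 0 ≤ b s) (hbx : ∀ s, b s ≤ x) (r : Fin (n + 1)) :
    cutObjective d L R (Fin.insertNth r x b) ≤
      max (cutObjective d L R (Fin.cons x b)) (cutObjective d L R (Fin.snoc b x)) := by
  rw [← Fin.insertNth_zero', ← Fin.insertNth_last', cutObjective_insertNth,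
    cutObjective_insertNth, cutObjective_insertNth, Fin.val_zero, Fin.val_last]
  refine le_max_of_increment_eq_mul_monotone
    (c := fun t => d t * (x - (prefixSum b (t + 1) - prefixSum b t)))
    (D := fun t => L + prefixSum b t + prefixSum b (t + 1) - R - ∑ s, b s)
    (fun t ht => ?_) (fun t u htu => ?_) (fun t ht => ?_) r.is_le
  · have := prefixSum_succ b ⟨t, ht⟩
    exact mul_nonneg (hd t) (by linarith [hbx ⟨t, ht⟩])
  · have := prefixSum_mono hb htu
    have := prefixSum_mono hb (Nat.succ_le_succ htu)
    dsimp only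
    linarith
  · rw [insertCutObjective_succ d L R x b ⟨t, ht⟩, prefixSum_succ b ⟨t, ht⟩]
    ring

lemma cutObjective_cons (d : ℕ → ℤ) (L R x : ℤ) (b : Fin (n + 1) → ℤ) :
    cutObjective d L R (Fin.cons x b) =
      d 0 * (L + x) * (R + ∑ s, b s) + cutObjective (fun g => d (g + 1)) (L + x) R b := by
  rw [← Fin.insertNth_zero', cutObjective_insertNth, insertCutObjective, cutObjective,
    sum_range_succ']
  simp only [Fin.val_zero, Nat.not_lt_zero, if_false, prefixSum_zero, Nat.add_sub_cancel]
  rw [add_comm]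
  congr 1
  · ring
  · exact sum_congr rfl fun g _ => by ring

lemma cutObjective_snoc (d : ℕ → ℤ) (L R x : ℤ) (b : Fin (n + 1) → ℤ) :
    cutObjective d L R (Fin.snoc b x) =
      cutObjective d L (R + x) b + d n * (L + ∑ s, b s) * (R + x) := by
  rw [← Fin.insertNth_last', cutObjective_insertNth, insertCutObjective, cutObjective,
    sum_range_succ, prefixSum_of_le b le_rfl]
  simp only [Fin.val_last, Nat.add_sub_cancel, lt_add_iff_pos_right, zero_lt_one, if_true]
  congr 1
  · exact sum_congr rfl fun g hg => by rw [if_pos (Nat.lt_succ_of_lt (mem_range.1 hg))]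
  · ring

end Cuts

section Gaps

variable {n : ℕ}

lemma sub_eq_sum_gaps (x : ℕ → ℤ) {s : ℕ} (hs : s ≤ n) :
    x n - x s = ∑ g ∈ range n, if s ≤ g then x (g + 1) - x g else 0 := by
  rw [← sum_range_add_sum_Ico _ hs, sum_eq_zero fun g hg => if_neg (by simpa using hg),
    sum_congr rfl fun g hg => if_pos (mem_Ico.1 hg).1, sum_Ico_sub _ hs, zero_add]

/-- The last factor is `1` if gap `g` separates `s` and `t`, and `0` otherwise. -/
lemma abs_sub_eq_sum_gaps {x : ℕ → ℤ} (hx : Monotone x) {s t : ℕ} (hs : s ≤ n) (ht : t ≤ n) :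
    |x s - x t| = ∑ g ∈ range n, (x (g + 1) - x g) *
      ((if s ≤ g then 1 else 0) + (if t ≤ g then 1 else 0) -
        2 * (if s ≤ g then 1 else 0) * (if t ≤ g then 1 else 0)) := by
  wlog hst : s ≤ t generalizing s t
  · rw [abs_sub_comm, this ht hs (by omega)]
    exact sum_congr rfl fun g _ => by ring
  rw [abs_sub_comm, abs_of_nonneg (sub_nonneg.2 (hx hst)),
    ← sub_sub_sub_cancel_left _ _ (x n), sub_eq_sum_gaps x hs, sub_eq_sum_gaps x ht,
    ← sum_sub_distrib]
  refine sum_congr rfl fun g _ => ?_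
  split_ifs <;> omega

lemma sum_mul_last_sub_eq (x : ℕ → ℤ) (a : Fin (n + 1) → ℤ) :
    ∑ s, a s * (x n - x s) = ∑ g ∈ range n, (x (g + 1) - x g) * prefixSum a (g + 1) := by
  simp_rw [sub_eq_sum_gaps x (Fin.is_le _), prefixSum, mul_sum]
  rw [sum_comm]
  refine sum_congr rfl fun g _ => sum_congr rfl fun s _ => ?_
  split_ifs <;> first | omega | ring

lemma sum_mul_sub_first_eq (x : ℕ → ℤ) (a : Fin (n + 1) → ℤ) :
    ∑ s, a s * (x s - x 0) =
      ∑ g ∈ range n, (x (g + 1) - x g) * (∑ s, a s - prefixSum a (g + 1)) := by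
  calc ∑ s, a s * (x s - x 0) = (∑ s, a s) * (x n - x 0) - ∑ s, a s * (x n - x s) := by
        rw [sum_mul, ← sum_sub_distrib]
        exact sum_congr rfl fun s _ => by ring
    _ = _ := by
        rw [sum_mul_last_sub_eq, ← sum_range_sub x n, mul_sum, ← sum_sub_distrib]
        exact sum_congr rfl fun g _ => by ring

lemma sum_sum_mul_abs_sub_eq {x : ℕ → ℤ} (hx : Monotone x) (a : Fin (n + 1) → ℤ) :
    ∑ s, ∑ t, a s * a t * |x s - x t| = 2 * ∑ g ∈ range n,
      (x (g + 1) - x g) * (prefixSum a (g + 1) * (∑ s, a s - prefixSum a (g + 1))) := by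
  simp_rw [abs_sub_eq_sum_gaps hx (Fin.is_le _) (Fin.is_le _), mul_sum]
  rw [sum_congr rfl fun s _ => sum_comm, sum_comm]
  refine sum_congr rfl fun g _ => ?_
  set e : Fin (n + 1) → ℤ := fun s => if (s : ℕ) ≤ g then 1 else 0
  have hP : prefixSum a (g + 1) = ∑ s, a s * e s :=
    sum_congr rfl fun s _ => by simp only [e]; split_ifs <;> omega
  calc ∑ s, ∑ t, a s * a t * ((x (g + 1) - x g) * (e s + e t - 2 * e s * e t))
      = ∑ s, ∑ t, (x (g + 1) - x g) *
          ((a s * e s) * a t + a s * (a t * e t) - 2 * (a s * e s) * (a t * e t)) :=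
        sum_congr rfl fun s _ => sum_congr rfl fun t _ => by ring
    _ = _ := by
        simp only [mul_add, mul_sub, sum_add_distrib, sum_sub_distrib, ← mul_sum, ← sum_mul, hP]
        ring

end Gaps

def permWeights (α : ℕ → ℤ) {k : ℕ} (σ : Equiv.Perm (Fin k)) : Fin k → ℤ :=
  fun s => α ((σ s : ℕ) + 1)

def gapLengths (β : ℕ → ℤ) (m : ℕ) : ℕ → ℤ :=
  fun g => β (m + g + 1) - β (m + g)

lemma stateVal_eq_two_mul_cutObjective (α : ℕ → ℤ) {β : ℕ → ℤ} (hβ : Monotone β)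
    (n m : ℕ) (L R : ℤ) (σ : Equiv.Perm (Fin (n + 1))) :
    stateVal α β (n + 1) m L R σ =
      2 * cutObjective (gapLengths β m) L R (permWeights α σ) := by
  set a := permWeights α σ
  set x : ℕ → ℤ := fun i => β (m + i)
  have hx : Monotone x := fun i j h => hβ (by omega)
  have hL : ∑ s, a s * L * (x s - x 0) = L * ∑ s, a s * (x s - x 0) := by
    rw [mul_sum]; exact sum_congr rfl fun s _ => by ring
  have hR : ∑ s, a s * R * (x n - x s) = R * ∑ s, a s * (x n - x s) := by
    rw [mul_sum]; exact sum_congr rfl fun s _ => by ring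
  have hval : stateVal α β (n + 1) m L R σ = (∑ s, ∑ t, a s * a t * |x s - x t|) +
      2 * L * R * (x n - x 0) + 2 * ∑ s, a s * L * (x s - x 0) +
        2 * ∑ s, a s * R * (x n - x s) := by
    simp only [stateVal, a, x, permWeights, show m + (n + 1) - 1 = m + n by omega, add_zero]
  rw [hval, hL, hR, sum_sum_mul_abs_sub_eq hx, sum_mul_sub_first_eq, sum_mul_last_sub_eq,
    ← sum_range_sub x n, cutObjective, Nat.add_sub_cancel]
  simp only [mul_sum, ← sum_add_distrib]
  refine sum_congr rfl fun g _ => ?_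
  simp only [x, gapLengths, add_assoc]
  ring

section Perm

variable {n : ℕ}

lemma Equiv.Perm.exists_apply_succAbove_eq_castSucc (σ : Equiv.Perm (Fin (n + 1))) :
    ∃ τ : Equiv.Perm (Fin n),
      ∀ s, σ ((σ.symm (Fin.last n)).succAbove s) = (τ s).castSucc := by
  set r := σ.symm (Fin.last n)
  have hne : ∀ s, σ (r.succAbove s) ≠ Fin.last n := fun s h =>
    Fin.succAbove_ne r s (σ.injective (h.trans (σ.apply_symm_apply _).symm))
  have hinj : Function.Injective fun s => (σ (r.succAbove s)).castPred (hne s) := fun s t h =>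
    Fin.succAbove_right_injective (σ.injective (Fin.castPred_inj.1 h))
  exact ⟨Equiv.ofBijective _ (Finite.injective_iff_bijective.1 hinj), fun s => by simp⟩

lemma Equiv.Perm.exists_apply_eq_last_and_succAbove (r : Fin (n + 1)) (τ : Equiv.Perm (Fin n)) :
    ∃ σ : Equiv.Perm (Fin (n + 1)),
      σ r = Fin.last n ∧ ∀ s, σ (r.succAbove s) = (τ s).castSucc :=
  ⟨(finSuccEquiv' r).trans ((Equiv.optionCongr τ).trans (finSuccEquiv' (Fin.last n)).symm),
    by simp, fun s => by simp⟩

end Perm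

section Recursion

variable (α : ℕ → ℤ) {n : ℕ}

lemma permWeights_eq_insertNth {σ : Equiv.Perm (Fin (n + 1))} {τ : Equiv.Perm (Fin n)}
    {r : Fin (n + 1)} (hr : σ r = Fin.last n) (hσ : ∀ s, σ (r.succAbove s) = (τ s).castSucc) :
    permWeights α σ = Fin.insertNth r (α (n + 1)) (permWeights α τ) := by
  refine Fin.eq_insertNth_iff.2 ⟨by simp [permWeights, hr], funext fun s => ?_⟩
  simp [Fin.removeNth, permWeights, hσ]

lemma sum_permWeights (τ : Equiv.Perm (Fin n)) :
    ∑ s, permWeights α τ s = ∑ i ∈ Icc 1 n, α i :=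
  calc ∑ s, permWeights α τ s = ∑ s : Fin n, α ((s : ℕ) + 1) :=
        Equiv.sum_comp τ fun s : Fin n => α ((s : ℕ) + 1)
    _ = ∑ i ∈ Icc 1 n, α i := by
        rw [Fin.sum_univ_eq_sum_range (fun i => α (i + 1)), range_eq_Ico, sum_Ico_add',
          zero_add, Ico_add_one_right_eq_Icc]

lemma exists_permWeights_eq_insertNth (r : Fin (n + 1)) (τ : Equiv.Perm (Fin n)) :
    ∃ σ : Equiv.Perm (Fin (n + 1)),
      permWeights α σ = Fin.insertNth r (α (n + 1)) (permWeights α τ) :=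
  let ⟨σ, hr, hσ⟩ := Equiv.Perm.exists_apply_eq_last_and_succAbove r τ
  ⟨σ, permWeights_eq_insertNth α hr hσ⟩

lemma exists_insertNth_eq_permWeights (σ : Equiv.Perm (Fin (n + 1))) :
    ∃ (r : Fin (n + 1)) (τ : Equiv.Perm (Fin n)),
      permWeights α σ = Fin.insertNth r (α (n + 1)) (permWeights α τ) :=
  let ⟨τ, hτ⟩ := σ.exists_apply_succAbove_eq_castSucc
  ⟨_, τ, permWeights_eq_insertNth α (σ.apply_symm_apply _) hτ⟩

variable {β : ℕ → ℤ} (m : ℕ) (L R : ℤ)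

lemma two_mul_cutObjective_cons_permWeights (hβ : Monotone β) (τ : Equiv.Perm (Fin (n + 1))) :
    2 * cutObjective (gapLengths β m) L R (Fin.cons (α (n + 2)) (permWeights α τ)) =
      stateVal α β (n + 1) (m + 1) (L + α (n + 2)) R τ +
        2 * (L + α (n + 2)) * (∑ i ∈ Icc 1 (n + 1), α i + R) * (β (m + 1) - β m) := by
  have hgaps : (fun g => gapLengths β m (g + 1)) = gapLengths β (m + 1) :=
    funext fun g => by simp only [gapLengths, show m + (g + 1) = m + 1 + g by omega]
  rw [cutObjective_cons, hgaps, stateVal_eq_two_mul_cutObjective α hβ n, sum_permWeights]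
  simp only [gapLengths, add_zero]
  ring

lemma two_mul_cutObjective_snoc_permWeights (hβ : Monotone β) (τ : Equiv.Perm (Fin (n + 1))) :
    2 * cutObjective (gapLengths β m) L R (Fin.snoc (permWeights α τ) (α (n + 2))) =
      stateVal α β (n + 1) m L (R + α (n + 2)) τ +
        2 * (L + ∑ i ∈ Icc 1 (n + 1), α i) * (R + α (n + 2)) *
          (β (m + n + 1) - β (m + n)) := by
  rw [cutObjective_snoc, stateVal_eq_two_mul_cutObjective α hβ n, sum_permWeights]
  simp only [gapLengths]
  ring

lemma exists_stateVal_eq_cons (hβ : Monotone β) (τ : Equiv.Perm (Fin (n + 1))) :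
    ∃ σ, stateVal α β (n + 2) m L R σ =
      stateVal α β (n + 1) (m + 1) (L + α (n + 2)) R τ +
      2 * (L + α (n + 2)) * (∑ i ∈ Icc 1 (n + 1), α i + R) * (β (m + 1) - β m) := by
  obtain ⟨σ, hσ⟩ := exists_permWeights_eq_insertNth α 0 τ
  refine ⟨σ, ?_⟩
  rw [stateVal_eq_two_mul_cutObjective α hβ, hσ, Fin.insertNth_zero',
    two_mul_cutObjective_cons_permWeights α m L R hβ]

lemma exists_stateVal_eq_snoc (hβ : Monotone β) (τ : Equiv.Perm (Fin (n + 1))) :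
    ∃ σ, stateVal α β (n + 2) m L R σ = stateVal α β (n + 1) m L (R + α (n + 2)) τ +
      2 * (L + ∑ i ∈ Icc 1 (n + 1), α i) * (R + α (n + 2)) *
        (β (m + n + 1) - β (m + n)) := by
  obtain ⟨σ, hσ⟩ := exists_permWeights_eq_insertNth α (Fin.last _) τ
  refine ⟨σ, ?_⟩
  rw [stateVal_eq_two_mul_cutObjective α hβ, hσ, Fin.insertNth_last',
    two_mul_cutObjective_snoc_permWeights α m L R hβ]

lemma exists_stateVal_le_max (hβ : Monotone β) (hα0 : ∀ i, 0 ≤ α i) (hα : Monotone α)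
    (σ : Equiv.Perm (Fin (n + 2))) :
    ∃ τ, stateVal α β (n + 2) m L R σ ≤
      max (stateVal α β (n + 1) (m + 1) (L + α (n + 2)) R τ +
          2 * (L + α (n + 2)) * (∑ i ∈ Icc 1 (n + 1), α i + R) * (β (m + 1) - β m))
        (stateVal α β (n + 1) m L (R + α (n + 2)) τ +
          2 * (L + ∑ i ∈ Icc 1 (n + 1), α i) * (R + α (n + 2)) *
            (β (m + n + 1) - β (m + n))) := by
  obtain ⟨r, τ, hσ⟩ := exists_insertNth_eq_permWeights α σ
  refine ⟨τ, ?_⟩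
  rw [stateVal_eq_two_mul_cutObjective α hβ, hσ,
    ← two_mul_cutObjective_cons_permWeights α m L R hβ,
    ← two_mul_cutObjective_snoc_permWeights α m L R hβ, ← mul_max_of_nonneg _ _ zero_le_two]
  refine mul_le_mul_of_nonneg_left (cutObjective_insertNth_le_max (fun g => ?_) L R
    (fun s => hα0 _) (fun s => hα (by omega)) r) zero_le_two
  exact sub_nonneg.2 (hβ (Nat.le_succ _))

end Recursion

theorem stmt9_general (α β : ℕ → ℤ) (hα0 : ∀ i, 0 ≤ α i) (hα : Monotone α)
    (hβ : Monotone β) (k m : ℕ) (hk2 : 2 ≤ k) (L R : ℤ) :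
    stateOpt α β k m L R =
      max
        (stateOpt α β (k - 1) (m + 1) (L + α k) R +
          2 * (L + α k) * ((∑ i ∈ Finset.Icc 1 (k - 1), α i) + R) * (β (m + 1) - β m))
        (stateOpt α β (k - 1) m L (R + α k) +
          2 * (L + (∑ i ∈ Finset.Icc 1 (k - 1), α i)) * (R + α k) *
            (β (m + k - 1) - β (m + k - 2))) := by
  obtain ⟨j, rfl⟩ : ∃ j, k = j + 2 := ⟨k - 2, by omega⟩
  rw [show j + 2 - 1 = j + 1 from rfl, show m + (j + 2) - 1 = m + j + 1 by omega,
    show m + (j + 2) - 2 = m + j by omega]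
  apply le_antisymm
  · refine sup'_le _ _ fun σ _ => ?_
    obtain ⟨τ, hτ⟩ := exists_stateVal_le_max α m L R hβ hα0 hα σ
    exact hτ.trans (max_le_max (add_le_add_left (le_sup' _ (mem_univ τ)) _)
      (add_le_add_left (le_sup' _ (mem_univ τ)) _))
  · refine max_le ?_ ?_ <;> refine le_sub_iff_add_le.1 (sup'_le _ _ fun τ _ => ?_)
    · obtain ⟨σ, hσ⟩ := exists_stateVal_eq_cons α m L R hβ τ
      exact le_sub_iff_add_le.2 (hσ ▸ le_sup' _ (mem_univ σ))
    · obtain ⟨σ, hσ⟩ := exists_stateVal_eq_snoc α m L R hβ τ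
      exact le_sub_iff_add_le.2 (hσ ▸ le_sup' _ (mem_univ σ))

/-- correctness of the dynamic programming recursion: for k ≥ 2,
with M = Σ_{i=1}^{k−1} α_i,
Z(k,m,L,R) = max{ Z(k−1,m+1,L+α_k,R) + 2(L+α_k)(M+R)(β_{m+1}−β_m),
                  Z(k−1,m,L,R+α_k) + 2(L+M)(R+α_k)(β_{m+k−1}−β_{m+k−2}) }. -/
theorem stmt9 (α β : ℕ → ℤ) (hα0 : ∀ i, 0 ≤ α i) (hα : Monotone α)
    (hβ : Monotone β) (n k m : ℕ) (hk2 : 2 ≤ k) (hkn : k ≤ n)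
    (hm1 : 1 ≤ m) (hmn : m ≤ n - k + 1) (L R : ℤ) (hL : 0 ≤ L) (hR : 0 ≤ R) :
    stateOpt α β k m L R =
      max
        (stateOpt α β (k - 1) (m + 1) (L + α k) R +
          2 * (L + α k) * ((∑ i ∈ Finset.Icc 1 (k - 1), α i) + R) * (β (m + 1) - β m))
        (stateOpt α β (k - 1) m L (R + α k) +
          2 * (L + (∑ i ∈ Finset.Icc 1 (k - 1), α i)) * (R + α k) *
            (β (m + k - 1) - β (m + k - 2))) :=
  stmt9_general α β hα0 hα hβ k m hk2 L R
end

section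
/- Among all trees on r vertices, the path P_r has the largest Wiener index and the star K_{1,r−1} has the smallest Wiener index; in particular W(K_{1,r−1}) = (r−1)² and W(P_r) = (r³−r)/6. -/
/-- The star `K_{1,r−1}` on `Fin r`, with center `0`. -/
def starGraph (r : ℕ) : SimpleGraph (Fin r) :=
  SimpleGraph.fromRel (fun i _ => (i : ℕ) = 0)

open Finset

lemma two_mul_sum_range_abs_sub (r : ℕ) : 2 * ∑ i ∈ range r, |(i : ℤ) - r| = r ^ 2 + r := by
  rw [sum_congr rfl fun (i : ℕ) hi => abs_of_nonpos (by simp at hi; omega : (i : ℤ) - r ≤ 0)]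
  induction r with
  | zero => simp
  | succ r ih =>
    rw [sum_range_succ]
    simp only [neg_sub, Nat.cast_succ] at ih ⊢
    simp only [add_sub_right_comm _ (1 : ℤ), sum_add_distrib, sum_const, card_range, nsmul_eq_mul,
      mul_one]
    linarith

lemma three_mul_sum_range_sum_range_abs_sub (r : ℕ) :
    3 * ∑ i ∈ range r, ∑ j ∈ range r, |(i : ℤ) - j| = r ^ 3 - r := by
  induction r with
  | zero => simp
  | succ r ih =>
    have hcol := two_mul_sum_range_abs_sub r
    simp only [sum_range_succ, sum_add_distrib, sub_self, abs_zero, add_zero]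
    simp only [abs_sub_comm (r : ℤ)]
    push_cast
    linarith

namespace SimpleGraph

variable {V V' : Type*} {G : SimpleGraph V}

lemma Reachable.dist_map_le {G' : SimpleGraph V'} (f : G →g G') {u v : V}
    (h : G.Reachable u v) : G'.dist (f u) (f v) ≤ G.dist u v := by
  obtain ⟨p, hp⟩ := h.exists_walk_length_eq_dist
  rw [← hp, ← p.length_map f]
  exact dist_le _

lemma Reachable.succ_le_card_filter_dist_le [Fintype V] {v w : V} (h : G.Reachable v w) {k : ℕ}
    (hk : k < G.dist v w) : k + 1 ≤ #{u | G.dist v u ≤ k} := by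
  classical
  obtain ⟨p, hp, hlen⟩ := h.exists_path_of_dist
  have hinj : Set.InjOn p.getVert (range (k + 1)) :=
    hp.getVert_injOn.mono fun i hi => by simp at hi ⊢; omega
  calc k + 1 = #((range (k + 1)).image p.getVert) := by rw [card_image_of_injOn hinj, card_range]
    _ ≤ #{u | G.dist v u ≤ k} := card_le_card fun u hu => by
        obtain ⟨i, hi, rfl⟩ := mem_image.mp hu
        simp only [mem_filter, mem_univ, true_and]
        calc G.dist v (p.getVert i) ≤ (p.take i).length := dist_le _
          _ ≤ k := by simp at hi ⊢; omega

lemma card_filter_lt_dist_le [Fintype V] (v : V) (k : ℕ) :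
    #{u | k < G.dist v u} ≤ Fintype.card V - (k + 1) := by
  classical
  obtain hempty | ⟨w, hw⟩ := (filter (fun u => k < G.dist v u) univ).eq_empty_or_nonempty
  · simp [hempty]
  · have hk : k < G.dist v w := (mem_filter.mp hw).2
    have hball := (Reachable.of_dist_ne_zero (by omega)).succ_le_card_filter_dist_le hk
    have hsplit := card_filter_add_card_filter_not (s := univ) (fun u => k < G.dist v u)
    simp only [not_lt, card_univ] at hsplit
    omega

lemma sum_dist_le_sum_range [Fintype V] (v : V) :
    ∑ u, G.dist v u ≤ ∑ i ∈ range (Fintype.card V), i := by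
  classical
  set n := Fintype.card V
  have hlt : ∀ u, G.dist v u < n := fun u => by
    by_cases h : G.Reachable v u
    · obtain ⟨p, hp, hlen⟩ := h.exists_path_of_dist
      exact hlen ▸ hp.length_lt
    · rw [dist_eq_zero_of_not_reachable h]
      exact Fintype.card_pos_iff.mpr ⟨v⟩
  calc ∑ u, G.dist v u = ∑ u, #{k ∈ range n | k < G.dist v u} := by
        refine sum_congr rfl fun u _ => ?_
        rw [range_eq_Ico, Ico_filter_lt, min_eq_right (hlt u).le, Nat.card_Ico, Nat.sub_zero]
    _ = ∑ k ∈ range n, #{u | k < G.dist v u} := by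
        simp only [card_filter]
        exact sum_comm
    _ ≤ ∑ k ∈ range n, (n - (k + 1)) := sum_le_sum fun k _ => card_filter_lt_dist_le v k
    _ = ∑ i ∈ range n, i := by
        rw [← sum_range_reflect]
        exact sum_congr rfl fun k hk => by simp at hk; omega

lemma sum_dist_le [Fintype V] (v : V) :
    ∑ u, (G.dist v u : ℚ) ≤ (Fintype.card V : ℚ) * (Fintype.card V - 1) / 2 := by
  have hpos : 1 ≤ Fintype.card V := Fintype.card_pos_iff.mpr ⟨v⟩
  have hgauss := sum_range_id_mul_two (Fintype.card V)
  have hle : ((∑ u, G.dist v u : ℕ) : ℚ) ≤ ((∑ i ∈ range (Fintype.card V), i : ℕ) : ℚ) := by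
    exact_mod_cast sum_dist_le_sum_range v
  have hgauss' : ((∑ i ∈ range (Fintype.card V), i : ℕ) : ℚ) * 2
      = Fintype.card V * (Fintype.card V - 1) := by
    rw [← Nat.cast_one, ← Nat.cast_sub hpos]; exact_mod_cast hgauss
  push_cast at hle hgauss'
  linarith

lemma wienerIndex_le_wienerIndex_induce_compl_singleton_add [Fintype V] [DecidableEq V] (v : V)
    (h : (G.induce {v}ᶜ).Connected) :
    wienerIndex G ≤ wienerIndex (G.induce {v}ᶜ) + ∑ u, (G.dist v u : ℚ) := by
  have hmem : ∀ x, x ∈ univ.erase v ↔ x ∈ ({v}ᶜ : Set V) := by simp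
  have hsub : ∑ u ∈ univ.erase v, ∑ w ∈ univ.erase v, (G.dist u w : ℚ)
      ≤ ∑ u : ↥({v}ᶜ : Set V), ∑ w : ↥({v}ᶜ : Set V), ((G.induce {v}ᶜ).dist u w : ℚ) := by
    rw [sum_subtype _ hmem]
    refine sum_le_sum fun u _ => ?_
    rw [sum_subtype _ hmem]
    exact sum_le_sum fun w _ => by
      exact_mod_cast (h.preconnected u w).dist_map_le (Embedding.induce {v}ᶜ).toHom
  have hsplit : ∑ u, ∑ w, (G.dist u w : ℚ)
      = ∑ u ∈ univ.erase v, ∑ w ∈ univ.erase v, (G.dist u w : ℚ) + 2 * ∑ u, (G.dist v u : ℚ) := by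
    have hrow (u : V) :
        ∑ w, (G.dist u w : ℚ) = G.dist u v + ∑ w ∈ univ.erase v, (G.dist u w : ℚ) :=
      (add_sum_erase _ _ (mem_univ v)).symm
    have hcol : ∑ u ∈ univ.erase v, (G.dist u v : ℚ) = ∑ u, (G.dist v u : ℚ) := by
      rw [sum_erase _ (by simp)]
      simp_rw [dist_comm]
    rw [← add_sum_erase _ _ (mem_univ v), sum_congr rfl fun u _ => hrow u, sum_add_distrib, hcol]
    ring
  unfold wienerIndex
  rw [hsplit]
  linarith

lemma wienerIndex_eq_zero_of_subsingleton [Fintype V] [Subsingleton V] : wienerIndex G = 0 := by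
  simp only [wienerIndex, div_eq_zero_iff]
  exact .inl <| sum_eq_zero fun u _ => sum_eq_zero fun w _ => by simp [Subsingleton.elim u w]

theorem Connected.wienerIndex_le [Fintype V] (hG : G.Connected) :
    wienerIndex G ≤ ((Fintype.card V : ℚ) ^ 3 - Fintype.card V) / 6 := by
  refine Finite.induction_subsingleton_or_nontrivial (P := fun W => ∀ [Fintype W]
    (H : SimpleGraph W), H.Connected →
      wienerIndex H ≤ ((Fintype.card W : ℚ) ^ 3 - Fintype.card W) / 6) V ?_ ?_ G hG
  · intro V _ _ _ G _
    have hcard : Fintype.card V ≤ 1 := Fintype.card_le_one_iff_subsingleton.mpr ‹_›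
    interval_cases Fintype.card V <;> simp [wienerIndex_eq_zero_of_subsingleton]
  · intro V _ _ ih _ G hG
    classical
    obtain ⟨v, hv⟩ := hG.exists_connected_induce_compl_singleton_of_finite_nontrivial
    have hcard : Fintype.card ↥({v}ᶜ : Set V) + 1 = Fintype.card V := by
      rw [Fintype.card_compl_set, Set.card_singleton]
      exact Nat.sub_add_cancel (Fintype.card_pos_iff.mpr ⟨v⟩)
    have hrest := ih _ (Finite.card_subtype_lt (p := (· ∈ ({v}ᶜ : Set V))) (x := v) (by simp)) _ hv
    have hrow := sum_dist_le (G := G) v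
    rw [← hcard] at hrow ⊢
    push_cast at hrow hrest ⊢
    linarith [wienerIndex_le_wienerIndex_induce_compl_singleton_add v hv]

/-- `G.dist u w - 2` is truncated subtraction: it is the excess of a distance over `2`. -/
lemma Connected.dist_add_ite_adj (hG : G.Connected) (u w : V) [Decidable (u = w)]
    [Decidable (G.Adj u w)] :
    G.dist u w + (if G.Adj u w then 1 else 0) = (if u = w then 0 else 2) + (G.dist u w - 2) := by
  by_cases huw : u = w
  · simp [huw]
  by_cases hadj : G.Adj u w
  · simp [huw, hadj, dist_eq_one_iff_adj.mpr hadj]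
  · have := hG.one_lt_dist_of_ne_of_not_adj huw hadj
    simp only [huw, hadj, if_false]
    omega

lemma Connected.sum_dist_add_degree [Fintype V] [DecidableRel G.Adj] (hG : G.Connected) (u : V) :
    ∑ w, G.dist u w + G.degree u = 2 * (Fintype.card V - 1) + ∑ w, (G.dist u w - 2) := by
  classical
  have hdeg : G.degree u = ∑ w, if G.Adj u w then 1 else 0 := by
    rw [sum_boole, Nat.cast_id, ← neighborFinset_eq_filter, card_neighborFinset_eq_degree]
  have hne : ∑ w, (if u = w then 0 else 2) = 2 * (Fintype.card V - 1) := by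
    rw [sum_ite, sum_const_zero, zero_add, sum_const, smul_eq_mul, filter_ne,
      card_erase_of_mem (mem_univ u), card_univ, mul_comm]
  rw [hdeg, ← hne, ← sum_add_distrib, ← sum_add_distrib]
  exact sum_congr rfl fun w _ => hG.dist_add_ite_adj u w

lemma Connected.wienerIndex_eq [Fintype V] [DecidableRel G.Adj] (hG : G.Connected) :
    wienerIndex G = (Fintype.card V : ℚ) * (Fintype.card V - 1) - #G.edgeFinset
      + (∑ u, ∑ w, (G.dist u w - 2) : ℕ) / 2 := by
  have htotal := congrArg (Nat.cast : ℕ → ℚ) <|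
    sum_congr rfl fun u (_ : u ∈ univ) => hG.sum_dist_add_degree u
  have hn : 1 ≤ Fintype.card V := Fintype.card_pos_iff.mpr hG.nonempty
  rw [sum_add_distrib, sum_add_distrib, sum_degrees_eq_twice_card_edges, sum_const, card_univ,
    smul_eq_mul] at htotal
  push_cast [Nat.cast_sub hn] at htotal
  rw [wienerIndex]
  push_cast
  linarith

lemma IsTree.wienerIndex_eq [Fintype V] (hT : G.IsTree) :
    wienerIndex G = ((Fintype.card V : ℚ) - 1) ^ 2 + (∑ u, ∑ w, (G.dist u w - 2) : ℕ) / 2 := by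
  classical
  have hE : (#G.edgeFinset : ℚ) = Fintype.card V - 1 := by
    rw [← hT.card_edgeFinset]; push_cast; ring
  rw [hT.connected.wienerIndex_eq, hE]
  ring

lemma IsTree.sq_card_sub_one_le_wienerIndex [Fintype V] (hT : G.IsTree) :
    ((Fintype.card V : ℚ) - 1) ^ 2 ≤ wienerIndex G := by
  rw [hT.wienerIndex_eq]
  have : (0 : ℚ) ≤ (∑ u, ∑ w, (G.dist u w - 2) : ℕ) / 2 := by positivity
  linarith

lemma IsTree.wienerIndex_eq_of_dist_le_two [Fintype V] (hT : G.IsTree)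
    (h : ∀ u w, G.dist u w ≤ 2) : wienerIndex G = ((Fintype.card V : ℚ) - 1) ^ 2 := by
  rw [hT.wienerIndex_eq]
  simp [Nat.sub_eq_zero_of_le (h _ _)]

lemma IsUniversal.dist_le_two {c : V} (hc : G.IsUniversal c) (u w : V) : G.dist u w ≤ 2 := by
  have hle (x : V) : G.dist c x ≤ 1 := by
    by_cases h : c = x
    · simp [h]
    · exact (dist_eq_one_iff_adj.mpr (hc h)).le
  calc G.dist u w ≤ G.dist u c + G.dist c w := (Connected.of_isUniversal hc).dist_triangle
    _ ≤ 2 := by rw [dist_comm]; linarith [hle u, hle w]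

lemma pathGraph_abs_sub_le_length {n : ℕ} {i j : Fin n} (p : (pathGraph n).Walk i j) :
    |(i : ℤ) - j| ≤ p.length := by
  induction p with
  | nil => simp
  | cons h _ ih =>
    rw [pathGraph_adj] at h
    rw [Walk.length_cons, abs_le] at *
    push_cast
    omega

lemma pathGraph_dist_add_le {n : ℕ} (i : Fin n) (k : ℕ) (hk : i + k < n) :
    (pathGraph n).dist i ⟨i + k, hk⟩ ≤ k := by
  induction k with
  | zero => simp
  | succ k ih =>
    have hadj : (pathGraph n).Adj ⟨i + k, by omega⟩ ⟨i + (k + 1), hk⟩ := by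
      rw [pathGraph_adj]; simp; omega
    have := hadj.reachable.dist_triangle_right i
    rw [dist_eq_one_iff_adj.mpr hadj] at this
    have := ih (by omega)
    omega

lemma pathGraph_dist {n : ℕ} (i j : Fin n) : ((pathGraph n).dist i j : ℤ) = |(i : ℤ) - j| := by
  refine le_antisymm ?_ ?_
  · wlog hij : i ≤ j generalizing i j
    · rw [dist_comm, abs_sub_comm]; exact this j i (le_of_not_ge hij)
    have := pathGraph_dist_add_le i (j - i) (by omega)
    simp only [Nat.add_sub_cancel' (Fin.le_def.mp hij), Fin.eta] at this
    rw [abs_of_nonpos (by simp [hij])]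
    have := Fin.le_def.mp hij
    omega
  · obtain ⟨p, hp⟩ := (pathGraph_preconnected n i j).exists_walk_length_eq_dist
    rw [← hp]
    exact pathGraph_abs_sub_le_length p

lemma wienerIndex_pathGraph (r : ℕ) : wienerIndex (pathGraph r) = ((r : ℚ) ^ 3 - r) / 6 := by
  have hsum : ∑ i, ∑ j, ((pathGraph r).dist i j : ℚ)
      = ((∑ i ∈ range r, ∑ j ∈ range r, |(i : ℤ) - j| : ℤ) : ℚ) := by
    rw [← Fin.sum_univ_eq_sum_range]
    push_cast
    refine sum_congr rfl fun i _ => ?_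
    rw [← Fin.sum_univ_eq_sum_range (fun j => |((i : ℕ) : ℚ) - j|)]
    refine sum_congr rfl fun j _ => ?_
    exact_mod_cast pathGraph_dist i j
  have h := congrArg (Int.cast : ℤ → ℚ) (three_mul_sum_range_sum_range_abs_sub r)
  push_cast at h hsum
  rw [wienerIndex, hsum]
  linarith

end SimpleGraph

lemma starGraph_eq_starGraph_zero {r : ℕ} (hr : 1 ≤ r) :
    starGraph r = SimpleGraph.starGraph (⟨0, hr⟩ : Fin r) := by
  ext u v
  simp [starGraph, Fin.ext_iff]

lemma wienerIndex_starGraph {r : ℕ} (hr : 1 ≤ r) :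
    wienerIndex (starGraph r) = ((r : ℚ) - 1) ^ 2 := by
  rw [starGraph_eq_starGraph_zero hr, (SimpleGraph.isTree_starGraph _).wienerIndex_eq_of_dist_le_two
    SimpleGraph.isUniversal_starGraph_self.dist_le_two, Fintype.card_fin]

/-- among all trees on r vertices the path has the largest and
the star the smallest Wiener index; moreover W(K_{1,r−1}) = (r−1)² and
W(P_r) = (r³−r)/6. -/
theorem stmt10 (r : ℕ) (hr : 1 ≤ r) :
    (∀ T : SimpleGraph (Fin r), T.IsTree →
        wienerIndex (starGraph r) ≤ wienerIndex T ∧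
        wienerIndex T ≤ wienerIndex (SimpleGraph.pathGraph r)) ∧
    wienerIndex (starGraph r) = ((r : ℚ) - 1) ^ 2 ∧
    wienerIndex (SimpleGraph.pathGraph r) = ((r : ℚ) ^ 3 - r) / 6 := by
  have hstar := wienerIndex_starGraph hr
  have hpath := SimpleGraph.wienerIndex_pathGraph r
  refine ⟨fun T hT => ⟨?_, ?_⟩, hstar, hpath⟩
  · simpa [hstar] using hT.sq_card_sub_one_le_wienerIndex
  · simpa [hpath] using hT.connected.wienerIndex_le
end
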